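/- For each a ∈ ℂ^d, the operator (T_a f)(z) = e^{-|a|²/2} e^{-\overline{a}·z} f(z+a) maps the Bargmann–Fock space A^{p,q}(ℂ^d) isometrically onto itself, for any 1 < p, q < ∞. -/

import Mathlib

open MeasureTheory

/-- The weighted translation `(T_a f)(z) = e^{-|a|²/2} e^{-ā·z} f(z+a)`. -/
noncomputable def fockT {d : ℕ} (a : Fin d → ℂ) (f : (Fin d → ℂ) → ℂ) : (Fin d → ℂ) → ℂ :=
  fun z => Complex.exp (-((∑ j, Complex.normSq (a j) : ℝ) : ℂ) / 2) *
    Complex.exp (-∑ j, (starRingEnd ℂ) (a j) * z j) * f (z + a)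

/-- The mixed-norm Fock integral
`∫_y (∫_x |f(x+iy)|^p e^{-p|x+iy|²/2} dx)^{q/p} dy` (valued in `ℝ≥0∞`). -/
noncomputable def fockInt {d : ℕ} (p q : ℝ) (f : (Fin d → ℂ) → ℂ) : ENNReal :=
  ∫⁻ y : Fin d → ℝ,
    (∫⁻ x : Fin d → ℝ, ENNReal.ofReal
      (‖f (fun j => (x j : ℂ) + (y j : ℂ) * Complex.I)‖ ^ p *
        Real.exp (-p * (∑ j, ((x j) ^ 2 + (y j) ^ 2)) / 2))) ^ (q / p)

/-- Membership in the Bargmann–Fock space `A^{p,q}(ℂ^d)`: entire with finite mixed norm. -/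
def memFock {d : ℕ} (p q : ℝ) (f : (Fin d → ℂ) → ℂ) : Prop :=
  Differentiable ℂ f ∧ fockInt p q f < ⊤

/-!
Writing `‖f‖_w(z) = |f(z)| e^{-|z|²/2}`, the expansion
`|z + a|² = |z|² + |a|² + 2 Re(ā·z)` gives `‖T_a f‖_w(z) = ‖f‖_w(z + a)`. The mixed norm
integrates a function of `‖f‖_w` against Lebesgue measure in `x` and then in `y`, so it is
invariant under the translation `z ↦ z + a`. Surjectivity follows from `T_a ∘ T_{-a} = id`.
-/

open Complex
open scoped ENNReal

noncomputable section

section MixedIntegral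

variable {ι : Type*}

def ofReIm (x y : ι → ℝ) : ι → ℂ := fun j => x j + y j * I

lemma ofReIm_add (x y : ι → ℝ) (a : ι → ℂ) :
    ofReIm x y + a = ofReIm (x + fun j => (a j).re) (y + fun j => (a j).im) := by
  funext j
  apply Complex.ext <;> simp [ofReIm]

variable [Fintype ι]

def mixedLIntegral (r : ℝ) (G : (ι → ℂ) → ℝ≥0∞) : ℝ≥0∞ :=
  ∫⁻ y, (∫⁻ x, G (ofReIm x y)) ^ r

lemma mixedLIntegral_comp_add_right (r : ℝ) (G : (ι → ℂ) → ℝ≥0∞) (a : ι → ℂ) :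
    mixedLIntegral r (fun z => G (z + a)) = mixedLIntegral r G := by
  simp only [mixedLIntegral, ofReIm_add]
  calc ∫⁻ y, (∫⁻ x, G (ofReIm (x + fun j => (a j).re) (y + fun j => (a j).im))) ^ r
      = ∫⁻ y, (∫⁻ x, G (ofReIm x (y + fun j => (a j).im))) ^ r := by
        refine lintegral_congr fun y => ?_
        rw [lintegral_add_right_eq_self (fun x => G (ofReIm x (y + fun j => (a j).im)))]
    _ = ∫⁻ y, (∫⁻ x, G (ofReIm x y)) ^ r :=
        lintegral_add_right_eq_self (fun y => (∫⁻ x, G (ofReIm x y)) ^ r) _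

end MixedIntegral

def fockWeightedNorm {d : ℕ} (f : (Fin d → ℂ) → ℂ) (z : Fin d → ℂ) : ℝ :=
  ‖f z‖ * Real.exp (-(∑ j, normSq (z j)) / 2)

lemma fockInt_eq_mixedLIntegral {d : ℕ} (p q : ℝ) (f : (Fin d → ℂ) → ℂ) :
    fockInt p q f =
      mixedLIntegral (q / p) (fun z => ENNReal.ofReal (fockWeightedNorm f z ^ p)) := by
  refine lintegral_congr fun y => congrArg (· ^ (q / p)) (lintegral_congr fun x => ?_)
  simp only [fockWeightedNorm, ofReIm, normSq_add_mul_I]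
  rw [Real.mul_rpow (norm_nonneg _) (Real.exp_nonneg _), ← Real.exp_mul]
  congr 3
  ring

lemma fockWeightedNorm_fockT {d : ℕ} (a : Fin d → ℂ) (f : (Fin d → ℂ) → ℂ)
    (z : Fin d → ℂ) : fockWeightedNorm (fockT a f) z = fockWeightedNorm f (z + a) := by
  have hsq : ∑ j, normSq ((z + a) j) =
      ∑ j, normSq (z j) + ∑ j, normSq (a j) + 2 * (∑ j, starRingEnd ℂ (a j) * z j).re := by
    simp only [Pi.add_apply, normSq_add, re_sum, Finset.mul_sum, ← Finset.sum_add_distrib]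
    refine Finset.sum_congr rfl fun j _ => ?_
    rw [mul_comm (starRingEnd ℂ (a j))]
  simp only [fockWeightedNorm, fockT, norm_mul, norm_exp, hsq]
  have hre : (-((∑ j, normSq (a j) : ℝ) : ℂ) / 2).re = -(∑ j, normSq (a j)) / 2 := by simp
  rw [hre, neg_re, mul_comm _ ‖f (z + a)‖, mul_assoc, ← Real.exp_add, ← Real.exp_add]
  congr 2
  ring

lemma fockInt_fockT {d : ℕ} (p q : ℝ) (a : Fin d → ℂ) (f : (Fin d → ℂ) → ℂ) :
    fockInt p q (fockT a f) = fockInt p q f := by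
  simp only [fockInt_eq_mixedLIntegral, fockWeightedNorm_fockT]
  exact mixedLIntegral_comp_add_right _ (fun z => ENNReal.ofReal (fockWeightedNorm f z ^ p)) a

lemma Differentiable.fockT {d : ℕ} (a : Fin d → ℂ) {f : (Fin d → ℂ) → ℂ}
    (hf : Differentiable ℂ f) : Differentiable ℂ (fockT a f) := by
  unfold _root_.fockT
  fun_prop

lemma fockT_fockT_neg {d : ℕ} (a : Fin d → ℂ) (g : (Fin d → ℂ) → ℂ) :
    fockT a (fockT (-a) g) = g := by
  funext z
  have hsum : ∑ j, starRingEnd ℂ (a j) * (z + a) j =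
      ∑ j, starRingEnd ℂ (a j) * z j + ((∑ j, normSq (a j) : ℝ) : ℂ) := by
    push_cast
    simp only [Pi.add_apply, mul_add, Finset.sum_add_distrib, mul_comm (starRingEnd ℂ _) (a _),
      mul_conj]
  simp only [fockT, Pi.neg_apply, normSq_neg, map_neg, neg_mul, Finset.sum_neg_distrib, neg_neg,
    add_neg_cancel_right, hsum]
  rw [← mul_assoc, ← mul_assoc, ← exp_add, ← exp_add, ← exp_add]
  conv_rhs => rw [← one_mul (g z), ← exp_zero]
  congr 2
  ring

lemma memFock.fockT {d : ℕ} {p q : ℝ} (a : Fin d → ℂ) {f : (Fin d → ℂ) → ℂ}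
    (hf : memFock p q f) : memFock p q (fockT a f) :=
  ⟨hf.1.fockT a, (fockInt_fockT p q a f).trans_lt hf.2⟩

end

theorem fockT_isometry_onto_general {d : ℕ} (p q : ℝ) (a : Fin d → ℂ) :
    (∀ f : (Fin d → ℂ) → ℂ, memFock p q f →
      memFock p q (fockT a f) ∧ fockInt p q (fockT a f) = fockInt p q f) ∧
    (∀ g : (Fin d → ℂ) → ℂ, memFock p q g →
      ∃ f : (Fin d → ℂ) → ℂ, memFock p q f ∧ fockT a f = g) :=
  ⟨fun f hf => ⟨hf.fockT a, fockInt_fockT p q a f⟩,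
    fun g hg => ⟨fockT (-a) g, hg.fockT (-a), fockT_fockT_neg a g⟩⟩

/-- For `1 < p, q < ∞`, `T_a` is an isometry of `A^{p,q}(ℂ^d)` onto itself. -/
theorem fockT_isometry_onto {d : ℕ} (p q : ℝ) (hp : 1 < p) (hq : 1 < q) (a : Fin d → ℂ) :
    (∀ f : (Fin d → ℂ) → ℂ, memFock p q f →
      memFock p q (fockT a f) ∧ fockInt p q (fockT a f) = fockInt p q f) ∧
    (∀ g : (Fin d → ℂ) → ℂ, memFock p q g →
      ∃ f : (Fin d → ℂ) → ℂ, memFock p q f ∧ fockT a f = g) :=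
  fockT_isometry_onto_general p q a
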